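/- Let r ≥ 1 be an integer, t ∈ ℂ with t ≠ 0, and set m = 2r and ℏ = 1/|t|. For every Schwartz function ψ : ℝ^{2r} → ℂ and every 1 ≤ j ≤ r, one has B(D_j ψ)(z) = (i/2)·( μ_j + δ_j )(B(ψ))(z) for all z ∈ ℂ^{2r}, where D_j ψ := (1/|t|)( ∂ψ/∂q_j + i ∂ψ/∂q_{j+r} ), μ_j f := (z_j + i z_{j+r}) f and δ_j f := (2/|t|)( ∂f/∂z_j + i ∂f/∂z_{j+r} ). -/

import Mathlib

/-!
Both sides are integrals of `ψ` against the Gaussian kernel `K(q, z)`, and the two derivatives of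
the kernel are explicit: `∂_{q_k} K = -(i z_k + q_k) K / ℏ` and `∂_{z_k} K = (z_k / 2 - i q_k) K / ℏ`.
Integrating by parts gives `B(∂_k ψ) = (i z_k B ψ + B(q_k ψ)) / ℏ`, and differentiating under the
integral sign gives `∂_{z_k} B ψ = (z_k B ψ / 2 - i B(q_k ψ)) / ℏ`; with `k = j, j + r`, both sides
of the identity then equal `i μ_j B ψ + B(M_j ψ)`.
Both steps rest on the bound `|K(q, z)| ≤ exp(|z|² / (4ℏ))`, uniform in `q`.
-/

open Complex MeasureTheory

noncomputable section

/-- The Bargmann kernel `exp(−(1/(4ℏ))(4i q·z + 2|q|² − z·z))`. -/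
def bKer (m : ℕ) (h : ℝ) (q : Fin m → ℝ) (z : Fin m → ℂ) : ℂ :=
  Complex.exp (-(1 / (4 * (h : ℂ))) *
    (4 * Complex.I * (∑ j, (q j : ℂ) * z j) + 2 * (∑ j, ((q j : ℂ))^2) - ∑ j, (z j)^2))

/-- The Bargmann transform `B(ψ)(z) = (πℏ)^{-m/4} ∫ ψ(q) exp(−(1/(4ℏ))(4i q·z + 2|q|² − z·z)) dq`. -/
def barg (m : ℕ) (h : ℝ) (ψ : (Fin m → ℝ) → ℂ) (z : Fin m → ℂ) : ℂ :=
  (((Real.pi * h) ^ (-(m : ℝ) / 4) : ℝ) : ℂ) * ∫ q : Fin m → ℝ, ψ q * bKer m h q z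

/-- The complex partial derivative `∂_{z_j} f` at `z`. -/
def cpder {m : ℕ} (j : Fin m) (f : (Fin m → ℂ) → ℂ) (z : Fin m → ℂ) : ℂ :=
  deriv (fun w : ℂ => f (Function.update z j w)) (z j)

/-- The operator `M_j ψ = (q_j + i q_{j+r}) ψ` on functions on `ℝ^{2r}`. -/
def Mop (r : ℕ) (j : Fin r) (ψ : (Fin (r+r) → ℝ) → ℂ) : (Fin (r+r) → ℝ) → ℂ :=
  fun q => ((q (Fin.castAdd r j) : ℂ) + Complex.I * (q (Fin.natAdd r j) : ℂ)) * ψ q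

/-- The operator `D_j ψ = (1/|t|)(∂ψ/∂q_j + i ∂ψ/∂q_{j+r})` on functions on `ℝ^{2r}`. -/
def Dop (r : ℕ) (t : ℂ) (j : Fin r) (ψ : (Fin (r+r) → ℝ) → ℂ) : (Fin (r+r) → ℝ) → ℂ :=
  fun q => (1 / (‖t‖ : ℂ)) *
    (fderiv ℝ ψ q (Pi.single (Fin.castAdd r j) 1)
      + Complex.I * fderiv ℝ ψ q (Pi.single (Fin.natAdd r j) 1))

/-- The operator `μ_j f = (z_j + i z_{j+r}) f` on functions on `ℂ^{2r}`. -/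
def muop (r : ℕ) (j : Fin r) (f : (Fin (r+r) → ℂ) → ℂ) : (Fin (r+r) → ℂ) → ℂ :=
  fun z => (z (Fin.castAdd r j) + Complex.I * z (Fin.natAdd r j)) * f z

/-- The operator `δ_j f = (2/|t|)(∂f/∂z_j + i ∂f/∂z_{j+r})` on functions on `ℂ^{2r}`. -/
def deltaop (r : ℕ) (t : ℂ) (j : Fin r) (f : (Fin (r+r) → ℂ) → ℂ) : (Fin (r+r) → ℂ) → ℂ :=
  fun z => (2 / (‖t‖ : ℂ)) *
    (cpder (Fin.castAdd r j) f z + Complex.I * cpder (Fin.natAdd r j) f z)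

open Finset

theorem hasDerivAt_mul_exp_quadratic (A c d : ℂ) :
    HasDerivAt (fun s : ℂ => A * exp (c * s + d * s ^ 2)) (c * A) 0 := by
  have hpoly : HasDerivAt (fun s : ℂ => c * s + d * s ^ 2) c 0 := by
    simpa using
      ((hasDerivAt_id (0 : ℂ)).const_mul c).fun_add ((hasDerivAt_pow 2 (0 : ℂ)).const_mul d)
  simpa [mul_comm] using hpoly.cexp.const_mul A

section Kernel

variable {n : ℕ} {h : ℝ}

theorem bKer_add_smul_single_left (q : Fin n → ℝ) (z : Fin n → ℂ) (k : Fin n) (s : ℝ) :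
    bKer n h (q + s • Pi.single k 1) z =
      bKer n h q z * exp (-(I * z k + q k) / h * s + -1 / (2 * h) * (s : ℂ) ^ 2) := by
  simp only [bKer, ← Complex.exp_add, Pi.add_apply, Pi.smul_apply, Pi.single_apply, smul_eq_mul,
    mul_ite, mul_one, mul_zero, ofReal_add, add_mul, add_sq, sum_add_distrib]
  congr 1
  simp only [apply_ite, ofReal_zero, ite_mul, zero_mul, mul_zero, ite_pow, zero_pow two_ne_zero,
    sum_ite_eq', mem_univ, if_true]
  ring

theorem bKer_add_smul_single_right (q : Fin n → ℝ) (z : Fin n → ℂ) (k : Fin n) (s : ℂ) :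
    bKer n h q (z + s • Pi.single k 1) =
      bKer n h q z * exp ((z k / 2 - I * q k) / h * s + 1 / (4 * h) * s ^ 2) := by
  simp only [bKer, ← Complex.exp_add, Pi.add_apply, Pi.smul_apply, Pi.single_apply, smul_eq_mul,
    mul_ite, mul_one, mul_zero, mul_add, add_sq, sum_add_distrib]
  congr 1
  simp only [ite_pow, zero_pow two_ne_zero, sum_ite_eq', mem_univ, if_true]
  ring

theorem hasLineDerivAt_bKer (q : Fin n → ℝ) (z : Fin n → ℂ) (k : Fin n) :
    HasLineDerivAt ℝ (fun q => bKer n h q z) (-(I * z k + q k) / h * bKer n h q z) q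
      (Pi.single k 1) := by
  have h0 := hasDerivAt_mul_exp_quadratic (bKer n h q z) (-(I * z k + q k) / h) (-1 / (2 * h))
  have := HasDerivAt.comp_ofReal (z := 0) (by rwa [ofReal_zero])
  simpa only [HasLineDerivAt, bKer_add_smul_single_left] using this

theorem hasDerivAt_bKer_update (q : Fin n → ℝ) (z : Fin n → ℂ) (k : Fin n) (w : ℂ) :
    HasDerivAt (fun w => bKer n h q (Function.update z k w))
      ((w / 2 - I * q k) / h * bKer n h q (Function.update z k w)) w := by
  have hline (w' : ℂ) :
      Function.update z k w + (w' - w) • Pi.single k 1 = Function.update z k w' := by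
    ext j
    rcases eq_or_ne j k with rfl | hj <;> simp [*]
  have h0 : HasDerivAt (fun s => bKer n h q (Function.update z k w + s • Pi.single k 1))
      ((w / 2 - I * q k) / h * bKer n h q (Function.update z k w)) (w - w) := by
    simpa only [bKer_add_smul_single_right, Function.update_self, sub_self] using
      hasDerivAt_mul_exp_quadratic (bKer n h q (Function.update z k w)) ((w / 2 - I * q k) / h)
        (1 / (4 * h))
  simpa only [hline] using h0.comp_sub_const w w

theorem norm_bKer_le (hh : 0 < h) (q : Fin n → ℝ) (z : Fin n → ℂ) :
    ‖bKer n h q z‖ ≤ Real.exp ((∑ j, ‖z j‖ ^ 2) / (4 * h)) := by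
  have hre : (-(1 / (4 * (h : ℂ))) * (4 * I * (∑ j, (q j : ℂ) * z j) + 2 * (∑ j, ((q j : ℂ)) ^ 2)
      - ∑ j, z j ^ 2)).re =
      ∑ j, (4 * q j * (z j).im - 2 * q j ^ 2 + (z j).re ^ 2 - (z j).im ^ 2) / (4 * h) := by
    have : -(1 / (4 * (h : ℂ))) = ((-(1 / (4 * h)) : ℝ) : ℂ) := by push_cast; ring
    simp only [this, sub_re, add_re, re_sum, mul_re, mul_im, I_re, I_im, ofReal_re,
      ofReal_im, re_ofNat, im_ofNat, sq, ← sum_add_distrib, ← sum_sub_distrib, mul_sum]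
    exact sum_congr rfl fun j _ => by ring
  rw [bKer, norm_exp, hre, ← sum_div]
  gcongr with j
  rw [Complex.sq_norm, Complex.normSq_apply]
  nlinarith [sq_nonneg (q j - (z j).im)]

theorem norm_bKer_update_le (hh : 0 < h) (q : Fin n → ℝ) (z : Fin n → ℂ) (k : Fin n) {w : ℂ}
    (hw : w ∈ Metric.ball (z k) 1) :
    ‖bKer n h q (Function.update z k w)‖ ≤ Real.exp ((∑ j, (‖z j‖ + 1) ^ 2) / (4 * h)) := by
  refine (norm_bKer_le hh q _).trans ?_
  gcongr with j
  rcases eq_or_ne j k with rfl | hj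
  · rw [Function.update_self]
    linarith [norm_le_norm_add_norm_sub' w (z j), mem_ball_iff_norm.1 hw]
  · simp [Function.update_of_ne hj]

theorem continuous_bKer (z : Fin n → ℂ) : Continuous fun q => bKer n h q z := by
  unfold bKer
  fun_prop

theorem integrable_mul_bKer (hh : 0 < h) {g : (Fin n → ℝ) → ℂ} (hg : Integrable g)
    (z : Fin n → ℂ) : Integrable fun q => g q * bKer n h q z :=
  hg.mul_bdd (continuous_bKer z).aestronglyMeasurable (ae_of_all _ fun q => norm_bKer_le hh q z)

end Kernel

section Bargmann

variable {n : ℕ} {h : ℝ}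

theorem barg_const_mul (c : ℂ) (f : (Fin n → ℝ) → ℂ) (z : Fin n → ℂ) :
    barg n h (fun q => c * f q) z = c * barg n h f z := by
  simp only [barg, mul_assoc, integral_const_mul]
  ring

theorem barg_add (hh : 0 < h) {f g : (Fin n → ℝ) → ℂ} (hf : Integrable f) (hg : Integrable g)
    (z : Fin n → ℂ) : barg n h (fun q => f q + g q) z = barg n h f z + barg n h g z := by
  simp only [barg, add_mul, ← mul_add]
  rw [integral_add (integrable_mul_bKer hh hf z) (integrable_mul_bKer hh hg z)]

theorem barg_fderiv_single (hh : 0 < h) {ψ : (Fin n → ℝ) → ℂ} {k : Fin n} (hψ : Integrable ψ)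
    (hqψ : Integrable fun q => (q k : ℂ) * ψ q)
    (hψ' : Integrable fun q => fderiv ℝ ψ q (Pi.single k 1)) (hdiff : Differentiable ℝ ψ)
    (z : Fin n → ℂ) :
    barg n h (fun q => fderiv ℝ ψ q (Pi.single k 1)) z =
      (I * z k * barg n h ψ z + barg n h (fun q => q k * ψ q) z) / h := by
  have hK' : (fun q => -(I * z k + q k) / h * bKer n h q z * ψ q) =
      fun q => -(I * z k * (ψ q * bKer n h q z) + q k * ψ q * bKer n h q z) / h :=
    funext fun q => by ring
  have hparts := integral_bilinear_hasLineDerivAt_right_eq_neg_left_of_integrable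
    (μ := volume) (B := ContinuousLinearMap.mul ℝ ℂ) (v := Pi.single k 1)
    (f := fun q => bKer n h q z) (g := ψ) (g' := fun q => fderiv ℝ ψ q (Pi.single k 1))
    (f' := fun q => -(I * z k + q k) / h * bKer n h q z)
    (by simpa only [ContinuousLinearMap.mul_apply', hK', Pi.add_apply, Pi.neg_apply] using
      ((((integrable_mul_bKer hh hψ z).const_mul _).add
        (integrable_mul_bKer hh hqψ z)).neg.div_const _))
    (by simpa only [ContinuousLinearMap.mul_apply', mul_comm] using integrable_mul_bKer hh hψ' z)
    (by simpa only [ContinuousLinearMap.mul_apply', mul_comm] using integrable_mul_bKer hh hψ z)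
    (fun q _ => hasLineDerivAt_bKer q z k)
    (fun q _ => (hdiff q).hasFDerivAt.hasLineDerivAt _)
  simp only [ContinuousLinearMap.mul_apply', hK'] at hparts
  rw [integral_div, integral_neg, integral_add ((integrable_mul_bKer hh hψ z).const_mul _)
    (integrable_mul_bKer hh hqψ z), integral_const_mul] at hparts
  simp only [barg, mul_comm _ (bKer n h _ z), hparts]
  ring

theorem cpder_barg (hh : 0 < h) {ψ : (Fin n → ℝ) → ℂ} {k : Fin n} (hψ : Integrable ψ)
    (hqψ : Integrable fun q => (q k : ℂ) * ψ q) (z : Fin n → ℂ) :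
    cpder k (barg n h ψ) z =
      (z k / 2 * barg n h ψ z - I * barg n h (fun q => q k * ψ q) z) / h := by
  set F' : ℂ → (Fin n → ℝ) → ℂ := fun w q =>
    (w / 2 * ψ q - I * (q k * ψ q)) / h * bKer n h q (Function.update z k w)
  set C : ℝ := Real.exp ((∑ j, (‖z j‖ + 1) ^ 2) / (4 * h))
  have hF'_meas : AEStronglyMeasurable (F' (z k)) := by
    refine (((hψ.const_mul _).sub (hqψ.const_mul I)).div_const _).aestronglyMeasurable.mul
      (continuous_bKer _).aestronglyMeasurable
  have h_bound : ∀ᵐ q, ∀ w ∈ Metric.ball (z k) 1,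
      ‖F' w q‖ ≤ ((‖z k‖ + 1) / 2 * ‖ψ q‖ + ‖(q k : ℂ) * ψ q‖) / h * C := by
    refine ae_of_all _ fun q w hw => ?_
    have hw' : ‖w‖ ≤ ‖z k‖ + 1 := by
      linarith [norm_le_norm_add_norm_sub' w (z k), mem_ball_iff_norm.1 hw]
    rw [norm_mul, norm_div, Complex.norm_real, Real.norm_of_nonneg hh.le]
    gcongr
    · refine (norm_sub_le _ _).trans ?_
      rw [norm_mul, norm_mul, norm_div, Complex.norm_I, one_mul, Complex.norm_ofNat]
      gcongr
    · exact norm_bKer_update_le hh q z k hw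
  have h_diff : ∀ᵐ q, ∀ w ∈ Metric.ball (z k) 1,
      HasDerivAt (fun w => ψ q * bKer n h q (Function.update z k w)) (F' w q) w :=
    ae_of_all _ fun q w _ =>
      ((hasDerivAt_bKer_update q z k w).const_mul (ψ q)).congr_deriv (by simp only [F']; ring)
  obtain ⟨-, hderiv⟩ := hasDerivAt_integral_of_dominated_loc_of_deriv_le
    (Metric.ball_mem_nhds (z k) one_pos)
    (Filter.Eventually.of_forall fun w => (integrable_mul_bKer hh hψ _).aestronglyMeasurable)
    (integrable_mul_bKer hh hψ _) hF'_meas h_bound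
    (((((hψ.norm.const_mul _).add hqψ.norm).div_const h).mul_const C)) h_diff
  have hF' : F' (z k) = fun q =>
      (z k / 2 * (ψ q * bKer n h q z) - I * (q k * ψ q * bKer n h q z)) / h := by
    ext q
    simp only [F', Function.update_eq_self]
    ring
  rw [hF', integral_div, integral_sub ((integrable_mul_bKer hh hψ z).const_mul _)
    ((integrable_mul_bKer hh hqψ z).const_mul _), integral_const_mul, integral_const_mul]
    at hderiv
  simp only [cpder, barg]
  rw [(hderiv.const_mul _).deriv]
  ring

end Bargmann

theorem SchwartzMap.integrable_ofReal_apply_mul {n : ℕ} (ψ : SchwartzMap (Fin n → ℝ) ℂ)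
    (k : Fin n) : Integrable fun q => (q k : ℂ) * ψ q := by
  refine (ψ.integrable_pow_mul volume 1).mono'
    ((continuous_ofReal.comp (continuous_apply k)).mul ψ.continuous).aestronglyMeasurable
    (ae_of_all _ fun q => ?_)
  rw [norm_mul, norm_real, pow_one]
  gcongr
  exact norm_le_pi_norm q k

theorem SchwartzMap.integrable_fderiv_apply {n : ℕ} (ψ : SchwartzMap (Fin n → ℝ) ℂ)
    (v : Fin n → ℝ) : Integrable fun q => fderiv ℝ ψ q v :=
  (LineDeriv.lineDerivOp v ψ).integrable.congr
    (ae_of_all _ (SchwartzMap.lineDerivOp_apply_eq_fderiv v ψ))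

theorem statement8_general (r : ℕ) (t : ℂ) (ht : t ≠ 0)
    (ψ : SchwartzMap (Fin (r+r) → ℝ) ℂ) (j : Fin r) :
    ∀ z : Fin (r+r) → ℂ,
      barg (r+r) (‖t‖)⁻¹ (Dop r t j ψ) z
        = (Complex.I / 2) *
          (muop r j (barg (r+r) (‖t‖)⁻¹ ψ) z
            + deltaop r t j (barg (r+r) (‖t‖)⁻¹ ψ) z) := by
  intro z
  have hh : 0 < ‖t‖⁻¹ := inv_pos.2 (norm_pos_iff.2 ht)
  have hDop : Dop r t j ψ = fun q => ((‖t‖⁻¹ : ℝ) : ℂ) *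
      (fderiv ℝ ψ q (Pi.single (Fin.castAdd r j) 1)
        + I * fderiv ℝ ψ q (Pi.single (Fin.natAdd r j) 1)) := by
    ext q
    simp [Dop]
  rw [hDop, barg_const_mul, barg_add hh (ψ.integrable_fderiv_apply _)
    ((ψ.integrable_fderiv_apply _).const_mul I), barg_const_mul,
    barg_fderiv_single hh ψ.integrable (ψ.integrable_ofReal_apply_mul _)
      (ψ.integrable_fderiv_apply _) ψ.differentiable,
    barg_fderiv_single hh ψ.integrable (ψ.integrable_ofReal_apply_mul _)
      (ψ.integrable_fderiv_apply _) ψ.differentiable]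
  simp only [muop, deltaop, cpder_barg hh ψ.integrable (ψ.integrable_ofReal_apply_mul _)]
  set A := barg (r+r) ‖t‖⁻¹ (fun q => (q (Fin.castAdd r j) : ℂ) * ψ q) z
  set B := barg (r+r) ‖t‖⁻¹ (fun q => (q (Fin.natAdd r j) : ℂ) * ψ q) z
  have ht' : ((‖t‖ : ℝ) : ℂ) ≠ 0 := ofReal_ne_zero.2 (norm_ne_zero_iff.2 ht)
  push_cast
  field_simp
  linear_combination (2 * A + 2 * I * B) * I_sq

/-- `B ∘ D_j = (i/2)(μ_j + δ_j) ∘ B` for the Bargmann transform with `ℏ = 1/|t|`. -/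
theorem statement8 (r : ℕ) (hr : 1 ≤ r) (t : ℂ) (ht : t ≠ 0)
    (ψ : SchwartzMap (Fin (r+r) → ℝ) ℂ) (j : Fin r) :
    ∀ z : Fin (r+r) → ℂ,
      barg (r+r) (‖t‖)⁻¹ (Dop r t j ψ) z
        = (Complex.I / 2) *
          (muop r j (barg (r+r) (‖t‖)⁻¹ ψ) z
            + deltaop r t j (barg (r+r) (‖t‖)⁻¹ ψ) z) :=
  statement8_general r t ht ψ j
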